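/- Let (Ω̄, 𝒢) be a measurable space, 𝒬 a nonempty set of probability measures on (Ω̄, 𝒢), and Y : Ω̄ → ℝ^d a 𝒢-measurable random variable. Then for h ∈ ℝ^d, h·Y = 0 𝒬-q.s. if and only if h·y = 0 for every y ∈ D; in other words, {h ∈ ℝ^d : h·Y = 0 𝒬-q.s.} is the orthogonal complement D^⊥ of the quasi-sure support D. -/

import Mathlib

open MeasureTheory Set

/-- The quasi-sure support of `Y` under the family of priors `𝒬`. -/
def qsSupport {Ω : Type*} [MeasurableSpace Ω] {d : ℕ} (𝒬 : Set (Measure Ω))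
    (Y : Ω → EuclideanSpace ℝ (Fin d)) : Set (EuclideanSpace ℝ (Fin d)) :=
  ⋂₀ {A : Set (EuclideanSpace ℝ (Fin d)) | IsClosed A ∧ ∀ P ∈ 𝒬, P (Y ⁻¹' A) = 1}

/-! The quasi-sure support is an intersection of closed sets, each of full measure under every
`P ∈ 𝒬`; since `ℝ^d` is hereditarily Lindelöf it is already a countable such intersection, so it
has full measure itself. Hence it is the smallest closed set carrying `Y` quasi-surely, and
`h·Y = 0` q.s. says exactly that the support lies in the closed hyperplane `h^⊥`. -/

theorem Filter.sInter_mem_of_isClosed {X : Type*} [TopologicalSpace X]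
    [HereditarilyLindelofSpace X] {l : Filter X} [CountableInterFilter l] {𝒞 : Set (Set X)}
    (hclosed : ∀ A ∈ 𝒞, IsClosed A) (hmem : ∀ A ∈ 𝒞, A ∈ l) : ⋂₀ 𝒞 ∈ l := by
  obtain ⟨t, htc, hteq⟩ :=
    eq_closed_inter_countable (Subtype.val : 𝒞 → Set X) fun A ↦ hclosed A A.2
  rw [sInter_eq_iInter, ← hteq]
  exact (countable_bInter_mem htc).2 fun A _ ↦ hmem A A.2

section qsSupport

variable {Ω : Type*} [MeasurableSpace Ω] {d : ℕ} {𝒬 : Set (Measure Ω)}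
  {Y : Ω → EuclideanSpace ℝ (Fin d)}

theorem ae_mem_qsSupport (h𝒬prob : ∀ P ∈ 𝒬, IsProbabilityMeasure P) (hY : Measurable Y)
    {P : Measure Ω} (hP : P ∈ 𝒬) : ∀ᵐ ω ∂P, Y ω ∈ qsSupport 𝒬 Y :=
  have := h𝒬prob P hP
  Filter.sInter_mem_of_isClosed (l := (ae P).map Y) (fun _ hA ↦ hA.1)
    fun _ hA ↦ (mem_ae_iff_prob_eq_one (hY hA.1.measurableSet)).2 (hA.2 P hP)

theorem qsSupport_subset_iff (h𝒬prob : ∀ P ∈ 𝒬, IsProbabilityMeasure P) (hY : Measurable Y)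
    {A : Set (EuclideanSpace ℝ (Fin d))} (hA : IsClosed A) :
    qsSupport 𝒬 Y ⊆ A ↔ ∀ P ∈ 𝒬, ∀ᵐ ω ∂P, Y ω ∈ A := by
  refine ⟨fun hsub P hP ↦ (ae_mem_qsSupport h𝒬prob hY hP).mono fun _ hω ↦ hsub hω,
    fun hae ↦ sInter_subset_of_mem ⟨hA, fun P hP ↦ ?_⟩⟩
  have := h𝒬prob P hP
  exact (mem_ae_iff_prob_eq_one (hY hA.measurableSet)).1 (hae P hP)

end qsSupport

theorem qs_zero_iff_mem_orthogonal_general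
    {Ω : Type*} [MeasurableSpace Ω] {d : ℕ}
    (𝒬 : Set (Measure Ω))
    (h𝒬prob : ∀ P ∈ 𝒬, IsProbabilityMeasure P)
    (Y : Ω → EuclideanSpace ℝ (Fin d)) (hY : Measurable Y) :
    {h : EuclideanSpace ℝ (Fin d) | ∀ P ∈ 𝒬, ∀ᵐ ω ∂P, (inner ℝ h (Y ω) : ℝ) = 0} =
      {h : EuclideanSpace ℝ (Fin d) | ∀ y ∈ qsSupport 𝒬 Y, (inner ℝ h y : ℝ) = 0} := by
  ext h
  exact (qsSupport_subset_iff h𝒬prob hY (innerSL ℝ h).isClosed_ker).symm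

/-- `h·Y = 0` 𝒬-q.s. iff `h` is orthogonal to the quasi-sure support `D`;
i.e. `{h | h·Y = 0 𝒬-q.s.} = D^⊥`. -/
theorem qs_zero_iff_mem_orthogonal
    {Ω : Type*} [MeasurableSpace Ω] {d : ℕ}
    (𝒬 : Set (Measure Ω)) (h𝒬ne : 𝒬.Nonempty)
    (h𝒬prob : ∀ P ∈ 𝒬, IsProbabilityMeasure P)
    (Y : Ω → EuclideanSpace ℝ (Fin d)) (hY : Measurable Y) :
    {h : EuclideanSpace ℝ (Fin d) | ∀ P ∈ 𝒬, ∀ᵐ ω ∂P, (inner ℝ h (Y ω) : ℝ) = 0} =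
      {h : EuclideanSpace ℝ (Fin d) | ∀ y ∈ qsSupport 𝒬 Y, (inner ℝ h y : ℝ) = 0} :=
  qs_zero_iff_mem_orthogonal_general 𝒬 h𝒬prob Y hY
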